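/- (Tauberian inequality.) Let (aₖ)_{k≥0} be a bounded real sequence. Then liminf_{n→∞} (1/n) Σ_{k=0}^{n−1} aₖ ≤ liminf_{β↑1} (1−β) Σ_{k=0}^{∞} βᵏ aₖ ≤ limsup_{β↑1} (1−β) Σ_{k=0}^{∞} βᵏ aₖ ≤ limsup_{n→∞} (1/n) Σ_{k=0}^{n−1} aₖ. -/

import Mathlib

/-!
Summation by parts writes the Abel mean `(1 - β) ∑ βᵏ aₖ` as an average of the Cesàro means
`σₙ₊₁ = (a₀ + ⋯ + aₙ) / (n + 1)` with the weights `(1 - β)² (n + 1) βⁿ`. These weights are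
nonnegative, sum to `1`, and each of them tends to `0` as `β → 1`: given `c > limsup σ`, the
finitely many `σₙ` above `c` carry vanishing weight, so the limsup of the average is at most `c`.
The liminf inequality is the same statement for `-a`.
-/

open Filter Topology Finset

lemma Real.limsup_neg {α : Type*} (f : α → ℝ) (l : Filter α) :
    limsup (-f) l = -liminf f l := by
  rw [limsup, liminf, limsSup, limsInf, Real.sInf_def]
  congr 2
  ext x
  simp only [Set.mem_neg, Set.mem_ofPred_eq, eventually_map, Pi.neg_apply, neg_le_neg_iff]

section WeightedMean

variable {x : ℕ → ℝ} {C : ℝ}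

lemma norm_mul_le_mul_of_abs_le {w : ℕ → ℝ} (hw0 : ∀ n, 0 ≤ w n) (hx : ∀ n, |x n| ≤ C) (n : ℕ) :
    ‖w n * x n‖ ≤ w n * C := by
  rw [Real.norm_eq_abs, abs_mul, abs_of_nonneg (hw0 n)]
  exact mul_le_mul_of_nonneg_left (hx n) (hw0 n)

lemma abs_tsum_mul_le_of_hasSum_one {w : ℕ → ℝ} (hw0 : ∀ n, 0 ≤ w n) (hw1 : HasSum w 1)
    (hx : ∀ n, |x n| ≤ C) : |∑' n, w n * x n| ≤ C := by
  simpa using tsum_of_norm_bounded (hw1.mul_right C) (norm_mul_le_mul_of_abs_le hw0 hx)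

lemma tsum_mul_le_add_sum_range {w : ℕ → ℝ} (hw0 : ∀ n, 0 ≤ w n) (hw1 : HasSum w 1)
    (hx : ∀ n, |x n| ≤ C) {c : ℝ} {N : ℕ} (hxc : ∀ n ≥ N, x n ≤ c) :
    ∑' n, w n * x n ≤ c + ∑ n ∈ range N, w n * (x n - c) := by
  have hwx : Summable fun n => w n * x n :=
    .of_norm_bounded (hw1.summable.mul_right C) (norm_mul_le_mul_of_abs_le hw0 hx)
  have hsum : HasSum (fun n => w n * (x n - c)) (∑' n, w n * x n - c) := by
    simpa [mul_sub] using hwx.hasSum.sub (hw1.mul_right c)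
  have htail : ∑' n, w (n + N) * (x (n + N) - c) ≤ 0 :=
    tsum_nonpos fun n =>
      mul_nonpos_of_nonneg_of_nonpos (hw0 _) (sub_nonpos.2 (hxc (n + N) (by omega)))
  have := hsum.summable.sum_add_tsum_nat_add N
  linarith [hsum.tsum_eq]

variable {ι : Type*} {l : Filter ι} {w : ι → ℕ → ℝ}
  (hw0 : ∀ᶠ i in l, ∀ n, 0 ≤ w i n) (hw1 : ∀ᶠ i in l, HasSum (w i) 1)
  (hw : ∀ n, Tendsto (fun i => w i n) l (𝓝 0))
include hw0 hw1

lemma eventually_abs_tsum_mul_le (hx : ∀ n, |x n| ≤ C) :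
    ∀ᶠ i in l, |∑' n, w i n * x n| ≤ C := by
  filter_upwards [hw0, hw1] with i h0 h1 using abs_tsum_mul_le_of_hasSum_one h0 h1 hx

include hw

lemma limsup_tsum_mul_le_limsup [l.NeBot] (hx : ∀ n, |x n| ≤ C) :
    limsup (fun i => ∑' n, w i n * x n) l ≤ limsup x atTop := by
  refine le_of_forall_gt_imp_ge_of_dense fun c hc => ?_
  obtain ⟨N, hN⟩ := eventually_atTop.1 <| eventually_lt_of_limsup_lt hc <|
    isBoundedUnder_of ⟨C, fun n => (le_abs_self _).trans (hx n)⟩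
  have hlim : Tendsto (fun i => c + ∑ n ∈ range N, w i n * (x n - c)) l (𝓝 c) := by
    simpa using tendsto_const_nhds.add (tendsto_finsetSum _ fun n _ => (hw n).mul_const (x n - c))
  calc limsup (fun i => ∑' n, w i n * x n) l
      ≤ limsup (fun i => c + ∑ n ∈ range N, w i n * (x n - c)) l := by
        refine limsup_le_limsup ?_ ?_ hlim.isBoundedUnder_le
        · filter_upwards [hw0, hw1] with i h0 h1
          exact tsum_mul_le_add_sum_range h0 h1 hx fun n hn => (hN n hn).le
        · exact isCoboundedUnder_le_of_eventually_le l
            ((eventually_abs_tsum_mul_le hw0 hw1 hx).mono fun i h => neg_le_of_abs_le h)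
    _ = c := hlim.limsup_eq

lemma liminf_le_liminf_tsum_mul [l.NeBot] (hx : ∀ n, |x n| ≤ C) :
    liminf x atTop ≤ liminf (fun i => ∑' n, w i n * x n) l := by
  have := limsup_tsum_mul_le_limsup hw0 hw1 hw (x := -x) (C := C) (by simpa using hx)
  simp only [Pi.neg_apply, mul_neg, tsum_neg] at this
  rw [← Pi.neg_def, Real.limsup_neg, Real.limsup_neg] at this
  linarith

end WeightedMean

lemma tsum_pow_mul_sum_range_succ {𝕜 : Type*} [NormedField 𝕜] [CompleteSpace 𝕜] {a : ℕ → 𝕜}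
    {β : 𝕜} (hβ : ‖β‖ < 1) (ha : Summable fun k => ‖β ^ k * a k‖) :
    ∑' n, β ^ n * ∑ k ∈ range (n + 1), a k = (∑' k, β ^ k * a k) * (1 - β)⁻¹ := by
  rw [← tsum_geometric_of_norm_lt_one hβ,
    tsum_mul_tsum_eq_tsum_sum_range_of_summable_norm ha (summable_norm_geometric_of_norm_lt_one hβ)]
  refine tsum_congr fun n => ?_
  rw [mul_sum]
  refine sum_congr rfl fun k hk => ?_
  rw [mul_right_comm, ← pow_add, Nat.add_sub_cancel' (mem_range_succ_iff.1 hk)]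

noncomputable def cesaroMean (a : ℕ → ℝ) (n : ℕ) : ℝ := (1 / (n : ℝ)) * ∑ k ∈ range n, a k

noncomputable def abelMean (a : ℕ → ℝ) (β : ℝ) : ℝ := (1 - β) * ∑' k, β ^ k * a k

def abelWeight (β : ℝ) (n : ℕ) : ℝ := (1 - β) ^ 2 * ((n + 1) * β ^ n)

variable {a : ℕ → ℝ} {C β : ℝ}

lemma abs_cesaroMean_le (ha : ∀ k, |a k| ≤ C) (n : ℕ) : |cesaroMean a n| ≤ C := by
  rcases n.eq_zero_or_pos with rfl | hn
  · simpa [cesaroMean] using (abs_nonneg _).trans (ha 0)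
  have hn : (0 : ℝ) < n := by exact_mod_cast hn
  rw [cesaroMean, abs_mul, abs_of_pos (by positivity), one_div_mul_eq_div, div_le_iff₀ hn]
  simpa [mul_comm] using (abs_sum_le_sum_abs a (range n)).trans (sum_le_sum fun k _ => ha k)

lemma abelWeight_nonneg (hβ : 0 ≤ β) (n : ℕ) : 0 ≤ abelWeight β n := by
  unfold abelWeight; positivity

lemma hasSum_abelWeight (hβ : |β| < 1) : HasSum (abelWeight β) 1 := by
  have hβ1 : 1 - β ≠ 0 := by linarith [le_abs_self β]
  have hβ' : ‖β‖ < 1 := by rwa [Real.norm_eq_abs]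
  have h := (hasSum_choose_mul_geometric_of_norm_lt_one 1 hβ').mul_left ((1 - β) ^ 2)
  rw [show (1 - β) ^ 2 * (1 / (1 - β) ^ (1 + 1)) = 1 by field_simp] at h
  have hw : abelWeight β = fun n => (1 - β) ^ 2 * ((n + 1).choose 1 * β ^ n) := by
    ext n
    simp [abelWeight]
  rwa [hw]

lemma tendsto_abelWeight (n : ℕ) : Tendsto (fun β => abelWeight β n) (𝓝 1) (𝓝 0) := by
  have : Continuous fun β => abelWeight β n := by unfold abelWeight; fun_prop
  simpa [abelWeight] using this.tendsto 1

lemma abelMean_eq_tsum_abelWeight_mul (ha : ∀ k, |a k| ≤ C) (hβ : |β| < 1) :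
    abelMean a β = ∑' n, abelWeight β n * cesaroMean a (n + 1) := by
  have hβ1 : 1 - β ≠ 0 := by linarith [le_abs_self β]
  have hsum : Summable fun k => ‖β ^ k * a k‖ := by
    refine .of_nonneg_of_le (fun _ => norm_nonneg _) (fun k => ?_)
      ((summable_geometric_of_lt_one (abs_nonneg β) hβ).mul_right C)
    rw [norm_mul, norm_pow, Real.norm_eq_abs, Real.norm_eq_abs]
    exact mul_le_mul_of_nonneg_left (ha k) (by positivity)
  have hterm : ∀ n : ℕ, abelWeight β n * cesaroMean a (n + 1)
      = (1 - β) ^ 2 * (β ^ n * ∑ k ∈ range (n + 1), a k) := by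
    intro n
    simp only [abelWeight, cesaroMean]
    field_simp
    push_cast
    ring
  rw [tsum_congr hterm, tsum_mul_left, tsum_pow_mul_sum_range_succ (by simpa using hβ) hsum,
    abelMean]
  field_simp

/-- Tauberian inequality: for a bounded real sequence `(aₖ)`,
`liminf_n (1/n) Σ_{k<n} aₖ ≤ liminf_{β↑1} (1−β) Σ βᵏ aₖ
  ≤ limsup_{β↑1} (1−β) Σ βᵏ aₖ ≤ limsup_n (1/n) Σ_{k<n} aₖ`,
limits in `β` taken along `β ∈ (0,1)`, `β → 1`. -/
theorem tauberian_inequality (a : ℕ → ℝ) (C : ℝ) (hC : ∀ k, |a k| ≤ C) :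
    liminf (fun n : ℕ => (1 / (n : ℝ)) * ∑ k ∈ Finset.range n, a k) atTop ≤
        liminf (fun β : ℝ => (1 - β) * ∑' k : ℕ, β ^ k * a k) (𝓝[Set.Ioo (0:ℝ) 1] 1) ∧
      liminf (fun β : ℝ => (1 - β) * ∑' k : ℕ, β ^ k * a k) (𝓝[Set.Ioo (0:ℝ) 1] 1) ≤
        limsup (fun β : ℝ => (1 - β) * ∑' k : ℕ, β ^ k * a k) (𝓝[Set.Ioo (0:ℝ) 1] 1) ∧
      limsup (fun β : ℝ => (1 - β) * ∑' k : ℕ, β ^ k * a k) (𝓝[Set.Ioo (0:ℝ) 1] 1) ≤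
        limsup (fun n : ℕ => (1 / (n : ℝ)) * ∑ k ∈ Finset.range n, a k) atTop := by
  set l := 𝓝[Set.Ioo (0:ℝ) 1] 1
  change liminf (cesaroMean a) atTop ≤ liminf (abelMean a) l ∧
    liminf (abelMean a) l ≤ limsup (abelMean a) l ∧
    limsup (abelMean a) l ≤ limsup (cesaroMean a) atTop
  have : l.NeBot := right_nhdsWithin_Ioo_neBot zero_lt_one
  have hβ : ∀ᶠ β in l, β ∈ Set.Ioo (0:ℝ) 1 := self_mem_nhdsWithin
  have hβ' : ∀ᶠ β in l, |β| < 1 := hβ.mono fun β h => abs_lt.2 ⟨by linarith [h.1], h.2⟩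
  have hw0 : ∀ᶠ β in l, ∀ n, 0 ≤ abelWeight β n := hβ.mono fun β h => abelWeight_nonneg h.1.le
  have hw1 : ∀ᶠ β in l, HasSum (abelWeight β) 1 := hβ'.mono fun β h => hasSum_abelWeight h
  have hw (n : ℕ) : Tendsto (fun β => abelWeight β n) l (𝓝 0) :=
    (tendsto_abelWeight n).mono_left nhdsWithin_le_nhds
  have hx (n : ℕ) : |cesaroMean a (n + 1)| ≤ C := abs_cesaroMean_le hC (n + 1)
  have habel : abelMean a =ᶠ[l] fun β => ∑' n, abelWeight β n * cesaroMean a (n + 1) :=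
    hβ'.mono fun β h => abelMean_eq_tsum_abelWeight_mul hC h
  have hbdd := eventually_abs_tsum_mul_le hw0 hw1 hx
  rw [liminf_congr habel, limsup_congr habel, ← liminf_nat_add _ 1, ← limsup_nat_add _ 1]
  exact ⟨liminf_le_liminf_tsum_mul hw0 hw1 hw hx,
    liminf_le_limsup (isBoundedUnder_of_eventually_le (hbdd.mono fun _ h => (abs_le.1 h).2))
      (isBoundedUnder_of_eventually_ge (hbdd.mono fun _ h => (abs_le.1 h).1)),
    limsup_tsum_mul_le_limsup hw0 hw1 hw hx⟩
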